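/- For every Δ ≥ 0 and D ≥ 1, the following orthogonality relations hold among the QAOA states on the alternative Bethe lattice: (i) ⟨Ψ^(Δ,D) | Ψ_l^(Δ,D)⟩ = 0 for all 1 ≤ l ≤ p; (ii) ⟨Ψ_l^(Δ,D) | Ψ_{m,n}^(Δ,D)⟩ = 0 for all 1 ≤ l ≤ p and 1 ≤ m < n ≤ p; and (iii) ⟨Ψ^(Δ,D) | Ψ_{l,m}^(Δ,D)⟩ = G^(sym,Δ,D)_{l,m} for all 1 ≤ l < m ≤ p. -/

import Mathlib

open scoped BigOperators

noncomputable section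

namespace QAOA

/-- The vertex set of the alternative Bethe lattice of degree `D` and depth `Δ`:
all tuples in `[D]^k` for `0 ≤ k ≤ Δ` (the root being the empty tuple). -/
abbrev Vertex (Δ D : ℕ) : Type := Σ k : Fin (Δ + 1), Fin (k : ℕ) → Fin D

/-- Spin configurations on the lattice: `{±1}^V`. -/
abbrev Spin (Δ D : ℕ) : Type := Vertex Δ D → ℤˣ

/-- The Hilbert space `ℂ^S` of the lattice, where `S` is the set of spin configurations. -/
abbrev Hs (Δ D : ℕ) : Type := EuclideanSpace ℂ (Spin Δ D)

/-- The root vertex (the empty tuple). -/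
def root (Δ D : ℕ) : Vertex Δ D := ⟨⟨0, Nat.succ_pos Δ⟩, Fin.elim0⟩

/-- The `j`-th child `(v, j)` of a vertex `v` of depth `< Δ`. -/
def child {Δ D : ℕ} (v : Vertex Δ D) (h : (v.1 : ℕ) < Δ) (j : Fin D) : Vertex Δ D :=
  ⟨⟨(v.1 : ℕ) + 1, by omega⟩, Fin.snoc v.2 j⟩

/-- The operator `Z_v`: multiplies the basis vector of a configuration by its spin at `v`. -/
def Zop (Δ D : ℕ) (v : Vertex Δ D) : Matrix (Spin Δ D) (Spin Δ D) ℂ :=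
  Matrix.diagonal fun σ => ((σ v : ℤ) : ℂ)

/-- The operator `X_v`: flips the spin at `v`. -/
def Xop (Δ D : ℕ) (v : Vertex Δ D) : Matrix (Spin Δ D) (Spin Δ D) ℂ :=
  Matrix.of fun σ τ => if σ = Function.update τ v (-τ v) then 1 else 0

/-- The cost Hamiltonian `C = D^{−1/2} Σ_{edges (v,(v,j))} Z_v Z_{(v,j)}`. -/
def Cop (Δ D : ℕ) : Matrix (Spin Δ D) (Spin Δ D) ℂ :=
  ((Real.sqrt D : ℂ))⁻¹ •
    ∑ v : Vertex Δ D, ∑ j : Fin D,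
      if h : (v.1 : ℕ) < Δ then Zop Δ D v * Zop Δ D (child v h j) else 0

/-- The mixer Hamiltonian `B = Σ_v X_v`. -/
def Bop (Δ D : ℕ) : Matrix (Spin Δ D) (Spin Δ D) ℂ := ∑ v : Vertex Δ D, Xop Δ D v

/-- The normalized uniform superposition `|+⟩` of all spin configurations. -/
def plus (Δ D : ℕ) : Hs Δ D :=
  (WithLp.equiv 2 _).symm fun _ => ((Real.sqrt (Fintype.card (Spin Δ D)) : ℂ))⁻¹

/-- Action of a matrix on a state of the lattice Hilbert space. -/
def mApply {Δ D : ℕ} (M : Matrix (Spin Δ D) (Spin Δ D) ℂ) (x : Hs Δ D) : Hs Δ D :=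
  (WithLp.equiv 2 _).symm (M.mulVec (WithLp.equiv 2 _ x))

/-- `prodAsc f a b = f a * f (a+1) * ⋯ * f b` (identity if `a > b`). -/
def prodAsc {M : Type*} [Monoid M] (f : ℕ → M) (a b : ℕ) : M :=
  ((List.range' a (b + 1 - a)).map f).prod

/-- `prodDesc f a b = f b * f (b-1) * ⋯ * f a` (identity if `a > b`). -/
def prodDesc {M : Type*} [Monoid M] (f : ℕ → M) (a b : ℕ) : M :=
  (((List.range' a (b + 1 - a)).reverse).map f).prod

/-- The `t`-th QAOA layer `e^{−iβ_t B} e^{−iγ_t C}`. -/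
def layer (Δ D : ℕ) (γ β : ℕ → ℝ) (t : ℕ) : Matrix (Spin Δ D) (Spin Δ D) ℂ :=
  NormedSpace.exp ((-(Complex.I * (β t : ℂ))) • Bop Δ D) *
    NormedSpace.exp ((-(Complex.I * (γ t : ℂ))) • Cop Δ D)

/-- The adjoint `e^{iγ_t C} e^{iβ_t B}` of the `t`-th QAOA layer. -/
def layerAdj (Δ D : ℕ) (γ β : ℕ → ℝ) (t : ℕ) : Matrix (Spin Δ D) (Spin Δ D) ℂ :=
  NormedSpace.exp ((Complex.I * (γ t : ℂ)) • Cop Δ D) *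
    NormedSpace.exp ((Complex.I * (β t : ℂ)) • Bop Δ D)

/-- The level-`p` QAOA state `|Ψ^(Δ,D)⟩ = e^{−iβ_p B} e^{−iγ_p C} ⋯ e^{−iβ_1 B} e^{−iγ_1 C} |+⟩`. -/
def psi (Δ D p : ℕ) (γ β : ℕ → ℝ) : Hs Δ D :=
  mApply (prodDesc (layer Δ D γ β) 1 p) (plus Δ D)

/-- The QAOA state with a single `Z_∅` inserted immediately before layer `l`. -/
def psiZ (Δ D p : ℕ) (γ β : ℕ → ℝ) (l : ℕ) : Hs Δ D :=
  mApply
    (prodDesc (layer Δ D γ β) l p * Zop Δ D (root Δ D) * prodDesc (layer Δ D γ β) 1 (l - 1))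
    (plus Δ D)

/-- The QAOA state with `Z_∅` inserted before layers `l` and `m` (`l < m`). -/
def psiZZ (Δ D p : ℕ) (γ β : ℕ → ℝ) (l m : ℕ) : Hs Δ D :=
  mApply
    (prodDesc (layer Δ D γ β) m p * Zop Δ D (root Δ D) *
      prodDesc (layer Δ D γ β) l (m - 1) * Zop Δ D (root Δ D) *
      prodDesc (layer Δ D γ β) 1 (l - 1))
    (plus Δ D)

/-- The symmetric `G` matrix entry `G^(sym,Δ,D)_{j,k}`: the two-times autocorrelation of
`Z_∅` with insertions before layers `j` and `k`, extended symmetrically (via `min`/`max`)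
to all `j, k`. -/
def Gsym (Δ D p : ℕ) (γ β : ℕ → ℝ) (j k : ℕ) : ℂ :=
  inner ℂ (plus Δ D)
    (mApply
      (prodAsc (layerAdj Δ D γ β) 1 p * prodDesc (layer Δ D γ β) (max j k) p *
        Zop Δ D (root Δ D) * prodDesc (layer Δ D γ β) (min j k) (max j k - 1) *
        Zop Δ D (root Δ D) * prodDesc (layer Δ D γ β) 1 (min j k - 1))
      (plus Δ D))

/-- The Hermitian `G` matrix entry `G^(herm,Δ,D)_{j,k} = ⟨Ψ_j^(Δ,D), Ψ_k^(Δ,D)⟩`. -/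
def Gherm (Δ D p : ℕ) (γ β : ℕ → ℝ) (j k : ℕ) : ℂ :=
  inner ℂ (psiZ Δ D p γ β j) (psiZ Δ D p γ β k)

end QAOA

end

open QAOA

/-!
The global spin flip `σ ↦ -σ` is a unitary permutation matrix fixing `|+⟩`. It commutes with
every `X_v` and with every product `Z_v Z_w`, hence with `B`, `C` and all QAOA layers, while it
anticommutes with `Z_∅`. So `Ψ` and `Ψ_{l,m}` are even and `Ψ_l` is odd under the flip, and an
even and an odd vector are orthogonal. Part (iii) only moves the layers of `Ψ` to the right side
of the inner product, where they become their adjoints because `B` and `C` are Hermitian.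
-/

open Matrix

lemma Matrix.conjTranspose_exp_neg_I_mul_smul {ι : Type*} [Fintype ι] [DecidableEq ι]
    {A : Matrix ι ι ℂ} (hA : IsSelfAdjoint A) (r : ℝ) :
    (NormedSpace.exp ((-(Complex.I * r)) • A))ᴴ = NormedSpace.exp ((Complex.I * r) • A) := by
  rw [← exp_conjTranspose, conjTranspose_smul, ← star_eq_conjTranspose, hA.star_eq]
  simp [Complex.conj_ofReal]

namespace QAOA

variable {Δ D : ℕ}

lemma mApply_mul (M N : Matrix (Spin Δ D) (Spin Δ D) ℂ) (x : Hs Δ D) :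
    mApply (M * N) x = mApply M (mApply N x) := by
  simp [mApply, mulVec_mulVec]

lemma mApply_one (x : Hs Δ D) : mApply 1 x = x := by
  simp [mApply]

lemma mApply_neg (M : Matrix (Spin Δ D) (Spin Δ D) ℂ) (x : Hs Δ D) :
    mApply (-M) x = -mApply M x := by
  simp [mApply, neg_mulVec]

lemma inner_mApply_left (M : Matrix (Spin Δ D) (Spin Δ D) ℂ) (x y : Hs Δ D) :
    inner ℂ (mApply M x) y = inner ℂ x (mApply Mᴴ y) := by
  simp only [mApply]
  exact (LinearMap.adjoint_inner_right (toEuclideanLin M) x y).symm.trans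
    (by rw [← toEuclideanLin_conjTranspose_eq_adjoint]; rfl)

lemma mApply_of_semiconjBy {P M M' : Matrix (Spin Δ D) (Spin Δ D) ℂ} (h : SemiconjBy P M M')
    {x : Hs Δ D} (hx : mApply P x = x) : mApply P (mApply M x) = mApply M' x := by
  rw [← mApply_mul, h.eq, mApply_mul, hx]

lemma inner_eq_zero_of_mApply_eq_neg {P : Matrix (Spin Δ D) (Spin Δ D) ℂ}
    (hP : P ∈ unitaryGroup (Spin Δ D) ℂ) {x y : Hs Δ D}
    (hx : mApply P x = x) (hy : mApply P y = -y) : inner ℂ x y = 0 := by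
  refine CharZero.eq_neg_self_iff.mp ?_
  calc inner ℂ x y = inner ℂ (mApply P x) (mApply P y) := by
        rw [inner_mApply_left, ← mApply_mul, ← star_eq_conjTranspose,
          mem_unitaryGroup_iff'.mp hP, mApply_one]
    _ = -inner ℂ x y := by rw [hx, hy, inner_neg_right]

lemma isSelfAdjoint_Zop (v : Vertex Δ D) : IsSelfAdjoint (Zop Δ D v) :=
  isHermitian_diagonal_of_self_adjoint _ (by ext; simp)

lemma isSelfAdjoint_Xop (v : Vertex Δ D) : IsSelfAdjoint (Xop Δ D v) := by
  have hflip : Function.Involutive fun σ : Spin Δ D => Function.update σ v (-σ v) :=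
    fun σ => by simp
  ext σ τ
  simp only [star_apply, Xop, of_apply, apply_ite star, star_one, star_zero, eq_comm (a := τ),
    hflip.eq_iff]

lemma isSelfAdjoint_Cop : IsSelfAdjoint (Cop Δ D) := by
  refine .smul (by simp [isSelfAdjoint_iff, Complex.conj_ofReal])
    (isSelfAdjoint_sum _ fun v _ => isSelfAdjoint_sum _ fun j _ => ?_)
  split_ifs
  · exact (IsSelfAdjoint.commute_iff (isSelfAdjoint_Zop _) (isSelfAdjoint_Zop _)).mp
      (commute_diagonal _ _)
  · exact .zero _

lemma isSelfAdjoint_Bop : IsSelfAdjoint (Bop Δ D) :=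
  isSelfAdjoint_sum _ fun v _ => isSelfAdjoint_Xop v

lemma conjTranspose_layer (γ β : ℕ → ℝ) (t : ℕ) :
    (layer Δ D γ β t)ᴴ = layerAdj Δ D γ β t := by
  rw [layer, layerAdj, conjTranspose_mul, conjTranspose_exp_neg_I_mul_smul isSelfAdjoint_Bop,
    conjTranspose_exp_neg_I_mul_smul isSelfAdjoint_Cop]

lemma conjTranspose_prodDesc_layer (γ β : ℕ → ℝ) (a b : ℕ) :
    (prodDesc (layer Δ D γ β) a b)ᴴ = prodAsc (layerAdj Δ D γ β) a b := by
  rw [prodDesc, prodAsc, conjTranspose_list_prod, List.map_reverse, List.map_reverse,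
    List.reverse_reverse, List.map_map]
  exact congrArg (fun f => (List.map f _).prod) (funext (conjTranspose_layer γ β))

def spinFlip (Δ D : ℕ) : Matrix (Spin Δ D) (Spin Δ D) ℂ :=
  (Equiv.neg (Spin Δ D)).permMatrix ℂ

lemma spinFlip_mem_unitaryGroup : spinFlip Δ D ∈ unitaryGroup (Spin Δ D) ℂ := by
  rw [mem_unitaryGroup_iff', star_eq_conjTranspose, spinFlip, conjTranspose_permMatrix,
    ← permMatrix_mul, mul_inv_cancel, permMatrix_one]

lemma mApply_spinFlip_plus : mApply (spinFlip Δ D) (plus Δ D) = plus Δ D := by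
  rw [mApply, spinFlip, permMatrix_mulVec]
  rfl

lemma semiconjBy_spinFlip_iff {M M' : Matrix (Spin Δ D) (Spin Δ D) ℂ} :
    SemiconjBy (spinFlip Δ D) M M' ↔ ∀ σ τ, M (-σ) τ = M' σ (-τ) := by
  rw [SemiconjBy, spinFlip, Equiv.Perm.permMatrix, PEquiv.toMatrix_toPEquiv_mul,
    PEquiv.mul_toMatrix_toPEquiv, ← Matrix.ext_iff]
  simp

lemma semiconjBy_spinFlip_Zop (v : Vertex Δ D) :
    SemiconjBy (spinFlip Δ D) (Zop Δ D v) (-Zop Δ D v) := by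
  refine semiconjBy_spinFlip_iff.mpr fun σ τ => ?_
  by_cases h : σ = -τ
  · simp [Zop, h]
  · have h' : -σ ≠ τ := fun h' => h (by rw [← h', neg_neg])
    simp [Zop, h, h']

lemma commute_spinFlip_Xop (v : Vertex Δ D) : Commute (spinFlip Δ D) (Xop Δ D v) := by
  refine semiconjBy_spinFlip_iff.mpr fun σ τ => ?_
  simp only [Xop, of_apply, ← Function.update_neg, Pi.neg_apply, neg_eq_iff_eq_neg]

lemma commute_spinFlip_Cop : Commute (spinFlip Δ D) (Cop Δ D) := by
  refine .smul_right (.sum_right _ _ _ fun v _ => .sum_right _ _ _ fun j _ => ?_) _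
  split_ifs
  · simpa [Commute] using (semiconjBy_spinFlip_Zop v).mul_right (semiconjBy_spinFlip_Zop _)
  · exact .zero_right _

lemma commute_spinFlip_Bop : Commute (spinFlip Δ D) (Bop Δ D) :=
  .sum_right _ _ _ fun v _ => commute_spinFlip_Xop v

lemma commute_spinFlip_prodDesc_layer (γ β : ℕ → ℝ) (a b : ℕ) :
    Commute (spinFlip Δ D) (prodDesc (layer Δ D γ β) a b) :=
  .list_prod_right _ _ fun _ h => by
    obtain ⟨t, -, rfl⟩ := List.mem_map.mp h
    exact ((commute_spinFlip_Bop.smul_right _).exp_right).mul_right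
      (commute_spinFlip_Cop.smul_right _).exp_right

variable (γ β : ℕ → ℝ) (p : ℕ)

lemma mApply_spinFlip_psi : mApply (spinFlip Δ D) (psi Δ D p γ β) = psi Δ D p γ β :=
  mApply_of_semiconjBy (commute_spinFlip_prodDesc_layer γ β 1 p) mApply_spinFlip_plus

lemma mApply_spinFlip_psiZ (l : ℕ) :
    mApply (spinFlip Δ D) (psiZ Δ D p γ β l) = -psiZ Δ D p γ β l := by
  have h := (SemiconjBy.mul_right (commute_spinFlip_prodDesc_layer γ β l p)
    (semiconjBy_spinFlip_Zop (root Δ D))).mul_right (commute_spinFlip_prodDesc_layer γ β 1 (l - 1))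
  rw [psiZ, mApply_of_semiconjBy h mApply_spinFlip_plus, mul_neg, neg_mul, mApply_neg]

lemma mApply_spinFlip_psiZZ (l m : ℕ) :
    mApply (spinFlip Δ D) (psiZZ Δ D p γ β l m) = psiZZ Δ D p γ β l m := by
  have h := (((SemiconjBy.mul_right (commute_spinFlip_prodDesc_layer γ β m p)
    (semiconjBy_spinFlip_Zop (root Δ D))).mul_right
    (commute_spinFlip_prodDesc_layer γ β l (m - 1))).mul_right
    (semiconjBy_spinFlip_Zop (root Δ D))).mul_right
    (commute_spinFlip_prodDesc_layer γ β 1 (l - 1))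
  rw [psiZZ, mApply_of_semiconjBy h mApply_spinFlip_plus]
  simp only [mul_neg, neg_mul, neg_neg]

end QAOA

theorem stmt14_general (p : ℕ) (γ β : ℕ → ℝ) (Δ D : ℕ) :
    (∀ l, 1 ≤ l → l ≤ p →
        (inner ℂ (psi Δ D p γ β) (psiZ Δ D p γ β l) : ℂ) = 0) ∧
      (∀ l m n, 1 ≤ l → l ≤ p → 1 ≤ m → m < n → n ≤ p →
        (inner ℂ (psiZ Δ D p γ β l) (psiZZ Δ D p γ β m n) : ℂ) = 0) ∧
      (∀ l m, 1 ≤ l → l < m → m ≤ p →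
        (inner ℂ (psi Δ D p γ β) (psiZZ Δ D p γ β l m) : ℂ) = Gsym Δ D p γ β l m) := by
  refine ⟨fun l _ _ => ?_, fun l m n _ _ _ _ _ => ?_, fun l m _ hlm _ => ?_⟩
  · exact inner_eq_zero_of_mApply_eq_neg spinFlip_mem_unitaryGroup
      (mApply_spinFlip_psi γ β p) (mApply_spinFlip_psiZ γ β p l)
  · exact inner_eq_zero_symm.mp <| inner_eq_zero_of_mApply_eq_neg spinFlip_mem_unitaryGroup
      (mApply_spinFlip_psiZZ γ β p m n) (mApply_spinFlip_psiZ γ β p l)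
  · rw [psi, psiZZ, Gsym, inner_mApply_left, ← mApply_mul, conjTranspose_prodDesc_layer,
      min_eq_left hlm.le, max_eq_right hlm.le]
    simp only [mul_assoc]

/-- Orthogonality relations among the QAOA states on the alternative
Bethe lattice: (i) `⟨Ψ, Ψ_l⟩ = 0`; (ii) `⟨Ψ_l, Ψ_{m,n}⟩ = 0`;
(iii) `⟨Ψ, Ψ_{l,m}⟩ = G^(sym,Δ,D)_{l,m}`. -/
theorem stmt14 (p : ℕ) (hp : 1 ≤ p) (γ β : ℕ → ℝ) (Δ D : ℕ) (hD : 1 ≤ D) :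
    (∀ l, 1 ≤ l → l ≤ p →
        (inner ℂ (psi Δ D p γ β) (psiZ Δ D p γ β l) : ℂ) = 0) ∧
      (∀ l m n, 1 ≤ l → l ≤ p → 1 ≤ m → m < n → n ≤ p →
        (inner ℂ (psiZ Δ D p γ β l) (psiZZ Δ D p γ β m n) : ℂ) = 0) ∧
      (∀ l m, 1 ≤ l → l < m → m ≤ p →
        (inner ℂ (psi Δ D p γ β) (psiZZ Δ D p γ β l m) : ℂ) = Gsym Δ D p γ β l m) :=
  stmt14_general p γ β Δ D
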